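/- In the steady state of the AIMD fluid model with N sessions, if W_1 ≥ W_2 ≥ ⋯ ≥ W_N, W_1/2 = K·N, and consecutive gaps satisfy W_n − W_{n+1} = K for all n < N, then after the largest window is halved and all windows grow by K, the resulting multiset of window sizes equals the original multiset shifted: W_{n+1}^{new} = W_n^{old} for n < N and W_1^{new} = W_1/2 + K = W_N. Hence the window configuration is periodic with period K time slots. -/

import Mathlib

/-!
Equal gaps make the windows an arithmetic progression with step `K`, so the smallest window is
`W_1 - (N - 1) K = W_1 / 2 + K`, exactly the new size of the halved window. Every other window
grows into the size of its predecessor, so the new configuration is the old one composed with a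
cyclic rotation of the sessions.
-/

open Finset

theorem apply_eq_apply_zero_sub_nsmul {α : Type*} [AddCommGroup α] {N : ℕ} (f : Fin N → α)
    (K : α) (hgap : ∀ n : Fin N, ∀ h : n.val + 1 < N, f n - f ⟨n.val + 1, h⟩ = K) :
    ∀ (k : ℕ) (hk : k < N), f ⟨k, hk⟩ = f ⟨0, by omega⟩ - k • K
  | 0, _ => by simp
  | k + 1, hk => by
    have hstep : f ⟨k + 1, hk⟩ = f ⟨k, by omega⟩ - K := by
      rw [← hgap ⟨k, by omega⟩ hk, sub_sub_cancel]
    rw [hstep, apply_eq_apply_zero_sub_nsmul f K hgap k, succ_nsmul, sub_sub]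

theorem univ_val_map_eq_of_rotated {β : Type*} {m : ℕ} (f g : Fin (m + 1) → β)
    (hwrap : g ⟨0, m.succ_pos⟩ = f ⟨m, m.lt_succ_self⟩)
    (hshift : ∀ k (hk : k < m), g ⟨k + 1, Nat.succ_lt_succ hk⟩ = f ⟨k, hk.trans m.lt_succ_self⟩) :
    univ.val.map g = univ.val.map f := by
  have hrot : g ∘ finRotate (m + 1) = f := by
    funext ⟨k, hk⟩
    rcases Nat.lt_succ_iff_lt_or_eq.mp hk with hk | rfl
    · rw [Function.comp_apply, finRotate_of_lt hk, hshift k hk]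
    · rw [Function.comp_apply, finRotate_last', hwrap]
  rw [← hrot, ← Multiset.map_map, Multiset.map_univ_val_equiv]

/-- At a halving event the largest window `W 0` is replaced by `W 0 / 2`,
then all windows grow by `K` until the next event. -/
theorem stmt5 (N : ℕ) (hN : 2 ≤ N) (W : Fin N → ℝ) (K : ℝ)
    (hhalf : W ⟨0, by omega⟩ / 2 = K * N)
    (hgap : ∀ n : Fin N, ∀ h : n.val + 1 < N, W n - W ⟨n.val + 1, h⟩ = K)
    (Wnew : Fin N → ℝ)
    (hdef0 : Wnew ⟨0, by omega⟩ = W ⟨0, by omega⟩ / 2 + K)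
    (hdefs : ∀ n : Fin N, ∀ h : n.val + 1 < N, Wnew ⟨n.val + 1, h⟩ = W ⟨n.val + 1, h⟩ + K) :
    (∀ n : Fin N, ∀ h : n.val + 1 < N, Wnew ⟨n.val + 1, h⟩ = W n) ∧
    Wnew ⟨0, by omega⟩ = W ⟨N - 1, by omega⟩ ∧
    Multiset.map Wnew Finset.univ.val = Multiset.map W Finset.univ.val := by
  have hshift : ∀ n : Fin N, ∀ h : n.val + 1 < N, Wnew ⟨n.val + 1, h⟩ = W n := fun n h => by
    linarith [hdefs n h, hgap n h]
  have hwrap : Wnew ⟨0, by omega⟩ = W ⟨N - 1, by omega⟩ := by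
    have hlast := apply_eq_apply_zero_sub_nsmul W K hgap (N - 1) (by omega)
    rw [nsmul_eq_mul, Nat.cast_sub (by omega), Nat.cast_one] at hlast
    rw [hdef0, hlast]
    linarith
  refine ⟨hshift, hwrap, ?_⟩
  obtain ⟨m, rfl⟩ : ∃ m, N = m + 1 := ⟨N - 1, by omega⟩
  exact univ_val_map_eq_of_rotated W Wnew hwrap fun k hk => hshift ⟨k, by omega⟩ (Nat.succ_lt_succ hk)
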